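/- The multiplication of trees defined by substitution (write t in terms of 1 = the Y tree using ⊣ and ⊢, then replace each occurrence of 1 by s) satisfies: if s has n internal vertices and t has m internal vertices, then every tree in s × t has n·m internal vertices. -/

import Mathlib

/-- Planar binary rooted trees: either the trivial tree `leaf` (drawn `|`)
or the grafting `node l r = l ∨ r` of two trees. -/
inductive PBT : Type
  | leaf : PBT
  | node : PBT → PBT → PBT
deriving DecidableEq

namespace PBT

/-- Number of internal vertices of a tree. -/
def size : PBT → ℕ
  | leaf => 0
  | node l r => l.size + r.size + 1

/-- The dendriform sum of two trees, a set of trees: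
`s + t = (s ⊣ t) ∪ (s ⊢ t)` with `s ⊣ t = sˡ ∨ (sʳ + t)`, `s ⊢ t = (s + tˡ) ∨ tʳ`,
and the trivial tree acting as neutral element. -/
def addT : PBT → PBT → Set PBT
  | leaf, t => {t}
  | node l r, leaf => {node l r}
  | node l r, node l' r' =>
      (fun x => node l x) '' addT r (node l' r') ∪
      (fun x => node x r') '' addT (node l r) l'
termination_by s t => s.size + t.size
decreasing_by all_goals (simp [size] <;> omega)

/-- The left operation `s ⊣ t := sˡ ∨ (sʳ + t)` on trees (with `s ⊣ | = s`),
valued in sets of trees. -/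
def leftT : PBT → PBT → Set PBT
  | leaf, _ => ∅
  | node l r, leaf => {node l r}
  | node l r, node l' r' => (fun x => node l x) '' addT r (node l' r')

/-- The right operation `s ⊢ t := (s + tˡ) ∨ tʳ` on trees (with `| ⊢ t = t`),
valued in sets of trees. -/
def rightT : PBT → PBT → Set PBT
  | _, leaf => ∅
  | leaf, t => {t}
  | node l r, node l' r' => (fun x => node x r') '' addT (node l r) l'

/-- Elementwise extension of `⊣` to sets of trees. -/
def leftS (S T : Set PBT) : Set PBT := ⋃ s ∈ S, ⋃ t ∈ T, leftT s t

/-- Elementwise extension of `⊢` to sets of trees. -/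
def rightS (S T : Set PBT) : Set PBT := ⋃ s ∈ S, ⋃ t ∈ T, rightT s t

/-- Elementwise extension of the sum `+` to sets of trees:
`S + T = (S ⊣ T) ∪ (S ⊢ T)`. -/
def addS (S T : Set PBT) : Set PBT := ⋃ s ∈ S, ⋃ t ∈ T, addT s t

/-- A nonempty finite set of nontrivial trees. -/
def Good (S : Set PBT) : Prop := S.Nonempty ∧ S.Finite ∧ ∀ t ∈ S, t ≠ leaf

end PBT

namespace PBT

/-- Multiplication of a tree by a set of trees, by substitution: write
`t = tˡ ∨ tʳ` as `tˡ ⊢ 1 ⊣ tʳ` (where `1` is the one-vertex tree) and replace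
each occurrence of `1` by `S`, so `t × S = (tˡ × S) ⊢ S ⊣ (tʳ × S)`. -/
def mulT : PBT → Set PBT → Set PBT
  | leaf, _ => {leaf}
  | node l r, S => rightS (mulT l S) (leftS S (mulT r S))

/-- Elementwise extension of the multiplication to sets of trees. -/
def mulS (T S : Set PBT) : Set PBT := ⋃ t ∈ T, mulT t S

end PBT

namespace PBT

theorem size_addT : ∀ s t u, u ∈ addT s t → u.size = s.size + t.size
  | leaf, t, u => by
      simp only [addT, Set.mem_singleton_iff]
      rintro rfl; simp [size]
  | node l r, leaf, u => by
      simp only [addT, Set.mem_singleton_iff]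
      rintro rfl; simp [size]
  | node l r, node l' r', u => by
      simp only [addT, Set.mem_union, Set.mem_image]
      rintro (⟨x, hx, rfl⟩ | ⟨x, hx, rfl⟩)
      · have := size_addT r (node l' r') x hx
        simp [size] at this ⊢; omega
      · have := size_addT (node l r) l' x hx
        simp [size] at this ⊢; omega
termination_by s t => s.size + t.size
decreasing_by all_goals (simp [size] <;> omega)

theorem size_leftT (s t u : PBT) (h : u ∈ leftT s t) : u.size = s.size + t.size := by
  match s, t with
  | leaf, t => simp [leftT] at h
  | node l r, leaf =>
      simp only [leftT, Set.mem_singleton_iff] at h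
      subst h; simp [size]
  | node l r, node l' r' =>
      simp only [leftT, Set.mem_image] at h
      obtain ⟨x, hx, rfl⟩ := h
      have := size_addT r (node l' r') x hx
      simp [size] at this ⊢; omega

theorem size_rightT (s t u : PBT) (h : u ∈ rightT s t) : u.size = s.size + t.size := by
  match s, t with
  | s, leaf => simp [rightT] at h
  | leaf, node l' r' =>
      simp only [rightT, Set.mem_singleton_iff] at h
      subst h; simp [size]
  | node l r, node l' r' =>
      simp only [rightT, Set.mem_image] at h
      obtain ⟨x, hx, rfl⟩ := h
      have := size_addT (node l r) l' x hx
      simp [size] at this ⊢; omega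

theorem size_mulT (s t : PBT) : ∀ u ∈ mulT s {t}, u.size = s.size * t.size := by
  induction s with
  | leaf => intro u hu; simp [mulT] at hu; subst hu; simp [size]
  | node l r ihl ihr =>
      intro u hu
      simp only [mulT, rightS, leftS, Set.mem_iUnion, Set.mem_singleton_iff] at hu
      obtain ⟨a, ha, b, ⟨c, rfl, v, hv, hb⟩, hu⟩ := hu
      have h1 := ihl a ha
      have h2 := ihr v hv
      have h3 := size_leftT c v b hb
      have h4 := size_rightT a b u hu
      simp [size]; rw [h4, h1, h3, h2]; ring

end PBT

open PBT in
/-- If `s` has `n` internal vertices and `t` has `m` internal vertices, then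
every tree in the product `s × t` (defined by substitution) has `n·m` internal
vertices. -/
theorem size_of_mem_mulT (s t : PBT) (n m : ℕ) (hs : s.size = n) (ht : t.size = m) :
    ∀ u ∈ mulT s {t}, u.size = n * m := by
  subst hs ht; exact size_mulT s t
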